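/- Let Ω ⊆ 𝕆 be a domain, D_Ω the quotient of Ω̂ = {(z,I) ∈ ℂ×𝕊 : τ_I(z) ∈ Ω} by CCL-equivalence, and P : D_Ω → ℂ the map [(z,I)] ↦ z. Then P is well-defined and a local homeomorphism, i.e., (D_Ω, P) is a Riemann domain over ℂ. -/

import Mathlib

/-!
Over a non-real `z`, every point of a CCL chain starting at `τ_I z` has the same real part and
the same imaginary modulus, so it is `τ_K z` for some unit `K`. Each link of the chain, a pair of
coupled circular liftings ending over `z` or over `conj z`, can be prolonged along a short path in
the base with frozen spherical coordinates; hence `τ_I z ≃ τ_J z` persists for all nearby `z`.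
Over a real `z` all slices meet, and since the sphere of imaginary units is path-connected the
spherical coordinate can be turned from `I` to `J` above `z`. So the quotient map `Ω̂ → D_Ω` is
open, and `P` is continuous, open and injective on each open sheet `π^I(Ω^I)`.
-/

noncomputable section

/-- The octonions, realized as the Cayley–Dickson double of the quaternions. -/
@[ext] structure Octonion : Type where
  a : Quaternion ℝ
  b : Quaternion ℝ

notation "𝕆" => Octonion

namespace Octonion

instance : Zero 𝕆 := ⟨⟨0, 0⟩⟩
instance : One 𝕆 := ⟨⟨1, 0⟩⟩
instance : Add 𝕆 := ⟨fun x y => ⟨x.a + y.a, x.b + y.b⟩⟩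
instance : Neg 𝕆 := ⟨fun x => ⟨-x.a, -x.b⟩⟩
instance : Sub 𝕆 := ⟨fun x y => ⟨x.a - y.a, x.b - y.b⟩⟩
/-- Cayley–Dickson multiplication. -/
instance : Mul 𝕆 := ⟨fun x y => ⟨x.a * y.a - star y.b * x.b, y.b * x.a + x.b * star y.a⟩⟩
instance : SMul ℝ 𝕆 := ⟨fun r x => ⟨r • x.a, r • x.b⟩⟩
instance : SMul ℕ 𝕆 := ⟨fun n x => ⟨n • x.a, n • x.b⟩⟩
instance : SMul ℤ 𝕆 := ⟨fun n x => ⟨n • x.a, n • x.b⟩⟩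

def toProd (x : 𝕆) : Quaternion ℝ × Quaternion ℝ := (x.a, x.b)

lemma toProd_injective : Function.Injective toProd := by
  intro x y h
  cases x; cases y
  simpa [toProd, Prod.ext_iff, Octonion.mk.injEq] using h

instance : AddCommGroup 𝕆 :=
  Function.Injective.addCommGroup toProd toProd_injective rfl (fun _ _ => rfl) (fun _ => rfl)
    (fun _ _ => rfl) (fun _ _ => rfl) (fun _ _ => rfl)

def toProdHom : 𝕆 →+ Quaternion ℝ × Quaternion ℝ :=
  { toFun := toProd, map_zero' := rfl, map_add' := fun _ _ => rfl }

instance : Module ℝ 𝕆 :=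
  Function.Injective.module ℝ toProdHom toProd_injective (fun _ _ => rfl)

def toProdLin : 𝕆 →ₗ[ℝ] Quaternion ℝ × Quaternion ℝ :=
  { toFun := toProd, map_add' := fun _ _ => rfl, map_smul' := fun _ _ => rfl }

instance : NormedAddCommGroup 𝕆 := NormedAddCommGroup.induced 𝕆 _ toProdHom toProd_injective
instance : NormedSpace ℝ 𝕆 := NormedSpace.induced ℝ 𝕆 _ toProdLin

/-- Octonionic conjugation. -/
def conj (x : 𝕆) : 𝕆 := ⟨star x.a, -x.b⟩

/-- The real part of an octonion. -/
def re (x : 𝕆) : ℝ := x.a.re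

/-- The imaginary part of an octonion. -/
def im (x : 𝕆) : 𝕆 := ⟨x.a.im, x.b⟩

/-- The squared (Euclidean) norm of an octonion. -/
def normSq (x : 𝕆) : ℝ := Quaternion.normSq x.a + Quaternion.normSq x.b

/-- The (Euclidean) norm of an octonion. -/
def onorm (x : 𝕆) : ℝ := Real.sqrt (normSq x)

instance : Inv 𝕆 := ⟨fun x => (normSq x)⁻¹ • conj x⟩

/-- The sphere of imaginary units of `𝕆`. -/
def sph : Set 𝕆 := {I | onorm I = 1 ∧ re I = 0}

/-- `tau I (α + β i) = α + β I`. -/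
def tau (I : 𝕆) (z : ℂ) : 𝕆 := z.re • (1 : 𝕆) + z.im • I

end Octonion

namespace Octonion

/-- `γ` and `Θ` define a circular lifting `t ↦ τ_{Θ t}(γ t)`: `γ` is a continuous path in `ℂ`
(the base) and `Θ` a continuous path in the sphere of imaginary units (the spherical
coordinate). -/
def IsCircularLifting (γ : unitInterval → ℂ) (Θ : unitInterval → 𝕆) : Prop :=
  Continuous γ ∧ Continuous Θ ∧ ∀ t, Θ t ∈ sph

/-- `x` and `x'` are CCL-connected in `Ω`: they are the terminal points of a pair of coupled
circular liftings contained in `Ω` (common base, same initial spherical coordinate). -/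
def CCLConnected (Ω : Set 𝕆) (x x' : 𝕆) : Prop :=
  ∃ γ Θ₁ Θ₂, IsCircularLifting γ Θ₁ ∧ IsCircularLifting γ Θ₂ ∧ Θ₁ 0 = Θ₂ 0 ∧
    (∀ t, tau (Θ₁ t) (γ t) ∈ Ω) ∧ (∀ t, tau (Θ₂ t) (γ t) ∈ Ω) ∧
    tau (Θ₁ 1) (γ 1) = x ∧ tau (Θ₂ 1) (γ 1) = x'

/-- CCL-equivalence in `Ω`: the equivalence closure of CCL-connectedness (finite chains). -/
def CCLEquiv (Ω : Set 𝕆) : 𝕆 → 𝕆 → Prop := Relation.EqvGen (CCLConnected Ω)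

end Octonion

namespace Octonion

/-- The disjoint union `Ω̂` of the complex slices of `Ω`, topologized as a disjoint union
(a set is open iff it is a union `⋃_I O^I × {I}` with each `O^I` open in `Ω^I`). -/
abbrev OHat (Ω : Set 𝕆) : Type := Σ I : sph, {z : ℂ // tau I.1 z ∈ Ω}

/-- The CCL equivalence relation on `Ω̂`: `(z,I) ≃ (z',I')` iff `z = z'` and `τ_I z`,
`τ_{I'} z'` are CCL-equivalent in `Ω`. -/
def ohatSetoid (Ω : Set 𝕆) : Setoid (OHat Ω) where
  r p q := p.2.1 = q.2.1 ∧ CCLEquiv Ω (tau p.1.1 p.2.1) (tau q.1.1 q.2.1)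
  iseqv := ⟨fun p => ⟨rfl, Relation.EqvGen.refl _⟩,
    fun h => ⟨h.1.symm, Relation.EqvGen.symm _ _ h.2⟩,
    fun h h' => ⟨h.1.trans h'.1, Relation.EqvGen.trans _ _ _ h.2 h'.2⟩⟩

/-- The quotient `D_Ω` of `Ω̂` by CCL equivalence, with the quotient topology. -/
abbrev DOmega (Ω : Set 𝕆) : Type := Quotient (ohatSetoid Ω)

end Octonion

open Topology

lemma Path.forall_trans_apply {X Y : Type*} [TopologicalSpace X] [TopologicalSpace Y]
    {x₀ x₁ x₂ : X} {y₀ y₁ y₂ : Y} {p : X → Y → Prop} {γ₁ : Path x₀ x₁} {γ₂ : Path x₁ x₂}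
    {δ₁ : Path y₀ y₁} {δ₂ : Path y₁ y₂} (h₁ : ∀ t, p (γ₁ t) (δ₁ t)) (h₂ : ∀ t, p (γ₂ t) (δ₂ t))
    (t : unitInterval) : p ((γ₁.trans γ₂) t) ((δ₁.trans δ₂) t) := by
  rw [Path.trans_apply, Path.trans_apply]
  split_ifs
  exacts [h₁ _, h₂ _]

lemma IsLocalHomeomorph.of_isLocallyInjective {X Y : Type*} [TopologicalSpace X]
    [TopologicalSpace Y] {f : X → Y} (hc : Continuous f) (ho : IsOpenMap f)
    (hi : IsLocallyInjective f) : IsLocalHomeomorph f := by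
  refine isLocalHomeomorph_iff_isOpenEmbedding_restrict.2 fun x => ?_
  obtain ⟨U, hU, hx, hinj⟩ := hi x
  exact ⟨U, hU.mem_nhds hx, .of_continuous_injective_isOpenMap (hc.comp continuous_subtype_val)
    (Set.injOn_iff_injective.1 hinj) (ho.comp hU.isOpenMap_subtype_val)⟩

namespace Octonion

@[simp] lemma add_a (x y : 𝕆) : (x + y).a = x.a + y.a := rfl
@[simp] lemma add_b (x y : 𝕆) : (x + y).b = x.b + y.b := rfl
@[simp] lemma neg_a (x : 𝕆) : (-x).a = -x.a := rfl
@[simp] lemma neg_b (x : 𝕆) : (-x).b = -x.b := rfl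
@[simp] lemma smul_a (r : ℝ) (x : 𝕆) : (r • x).a = r • x.a := rfl
@[simp] lemma smul_b (r : ℝ) (x : 𝕆) : (r • x).b = r • x.b := rfl
@[simp] lemma one_a : (1 : 𝕆).a = 1 := rfl
@[simp] lemma one_b : (1 : 𝕆).b = 0 := rfl

lemma re_smul_one_add_im (x : 𝕆) : re x • (1 : 𝕆) + im x = x := by
  ext : 1
  · show x.a.re • (1 : Quaternion ℝ) + x.a.im = x.a
    ext <;> simp [Quaternion.re_one, Quaternion.imI_one, Quaternion.imJ_one, Quaternion.imK_one]
  · show x.a.re • (0 : Quaternion ℝ) + x.b = x.b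
    simp

lemma onorm_smul (r : ℝ) (x : 𝕆) : onorm (r • x) = |r| * onorm x := by
  simp only [onorm, normSq, smul_a, smul_b, Quaternion.normSq_smul, ← mul_add,
    Real.sqrt_mul (sq_nonneg r), Real.sqrt_sq_eq_abs]

lemma onorm_neg (x : 𝕆) : onorm (-x) = onorm x := by
  simp [onorm, normSq]

lemma neg_mem_sph {I : 𝕆} (hI : I ∈ sph) : -I ∈ sph :=
  ⟨(onorm_neg I).trans hI.1, by simpa [re] using hI.2⟩

lemma re_tau {I : 𝕆} (hI : I ∈ sph) (z : ℂ) : re (tau I z) = z.re := by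
  have : I.a.re = 0 := hI.2
  simp [tau, re, this, Quaternion.re_one]

lemma im_tau {I : 𝕆} (hI : I ∈ sph) (z : ℂ) : im (tau I z) = z.im • I := by
  have hre : I.a.re = 0 := hI.2
  have hI' : (I.a.im : Quaternion ℝ) = I.a := by
    rw [← I.a.re_add_im, hre]; simp
  ext : 1
  · simp [tau, im, hI', Quaternion.im_one]
  · simp [tau, im]

lemma onorm_im_tau {I : 𝕆} (hI : I ∈ sph) (z : ℂ) : onorm (im (tau I z)) = |z.im| := by
  rw [im_tau hI, onorm_smul, hI.1, mul_one]

lemma tau_neg_conj (I : 𝕆) (z : ℂ) : tau (-I) (starRingEnd ℂ z) = tau I z := by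
  simp [tau]

lemma tau_of_im_eq_zero {z : ℂ} (hz : z.im = 0) (I J : 𝕆) : tau I z = tau J z := by
  simp [tau, hz]

lemma continuous_tau (I : 𝕆) : Continuous (tau I) := by
  unfold tau; fun_prop

lemma sph_eq_of_tau_eq {A B : 𝕆} (hA : A ∈ sph) (hB : B ∈ sph) {z : ℂ} (hz : z.im ≠ 0)
    (h : tau A z = tau B z) : A = B :=
  smul_right_injective 𝕆 hz <| by simpa only [im_tau hA, im_tau hB] using congrArg im h

lemma eq_or_eq_conj_of_tau_eq {A B : 𝕆} (hA : A ∈ sph) (hB : B ∈ sph) {u z : ℂ}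
    (h : tau A u = tau B z) : u = z ∨ u = starRingEnd ℂ z := by
  have hre : u.re = z.re := by simpa only [re_tau hA, re_tau hB] using congrArg re h
  have him : |u.im| = |z.im| := by
    simpa only [onorm_im_tau hA, onorm_im_tau hB] using congrArg (fun x => onorm (im x)) h
  rcases abs_eq_abs.1 him with him | him
  · exact .inl (Complex.ext hre him)
  · exact .inr (Complex.ext (by simpa using hre) (by simpa using him))

lemma exists_tau_eq {x : 𝕆} {z : ℂ} (hz : z.im ≠ 0) (hre : re x = z.re)
    (him : onorm (im x) = |z.im|) : ∃ K ∈ sph, tau K z = x := by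
  refine ⟨(z.im)⁻¹ • im x, ⟨?_, ?_⟩, ?_⟩
  · rw [onorm_smul, him, abs_inv, inv_mul_cancel₀ (abs_ne_zero.2 hz)]
  · simp [re, im]
  · rw [tau, smul_smul, mul_inv_cancel₀ hz, one_smul, ← hre, re_smul_one_add_im]

def ofImCoords : EuclideanSpace ℝ (Fin 7) →ₗ[ℝ] 𝕆 where
  toFun v := ⟨⟨0, v 0, v 1, v 2⟩, ⟨v 3, v 4, v 5, v 6⟩⟩
  map_add' _ _ := Octonion.ext (Quaternion.ext _ _ (add_zero 0).symm rfl rfl rfl) rfl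
  map_smul' r _ := Octonion.ext (Quaternion.ext _ _ (smul_zero r).symm rfl rfl rfl) rfl

lemma onorm_ofImCoords (v : EuclideanSpace ℝ (Fin 7)) : onorm (ofImCoords v) = ‖v‖ := by
  rw [EuclideanSpace.norm_eq, onorm, normSq, Quaternion.normSq_def', Quaternion.normSq_def']
  simp only [ofImCoords, LinearMap.coe_mk, AddHom.coe_mk, Fin.sum_univ_seven, Real.norm_eq_abs,
    sq_abs]
  ring_nf

lemma sph_eq_image_sphere : sph = ofImCoords '' Metric.sphere 0 1 := by
  ext I
  constructor
  · rintro ⟨hn, hre⟩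
    have hv : ofImCoords !₂[I.a.imI, I.a.imJ, I.a.imK, I.b.re, I.b.imI, I.b.imJ, I.b.imK] = I :=
      Octonion.ext (Quaternion.ext _ _ hre.symm rfl rfl rfl) rfl
    exact ⟨_, by rw [mem_sphere_zero_iff_norm, ← onorm_ofImCoords, hv, hn], hv⟩
  · rintro ⟨v, hv, rfl⟩
    exact ⟨(onorm_ofImCoords v).trans (by simpa using hv), by simp [ofImCoords, re]⟩

lemma isPathConnected_sph : IsPathConnected sph := by
  rw [sph_eq_image_sphere]
  refine (isPathConnected_sphere ?_ 0 zero_le_one).image ofImCoords.continuous_of_finiteDimensional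
  rw [← Module.finrank_eq_rank, finrank_euclideanSpace_fin]
  norm_num

variable {Ω : Set 𝕆}

lemma cclConnected_of_path {z₀ z₁ : ℂ} {J₀ J₁ J₂ : 𝕆} (γ : Path z₀ z₁) (Θ₁ : Path J₀ J₁)
    (Θ₂ : Path J₀ J₂) (h₁ : ∀ t, Θ₁ t ∈ sph ∧ tau (Θ₁ t) (γ t) ∈ Ω)
    (h₂ : ∀ t, Θ₂ t ∈ sph ∧ tau (Θ₂ t) (γ t) ∈ Ω) : CCLConnected Ω (tau J₁ z₁) (tau J₂ z₁) :=
  ⟨γ, Θ₁, Θ₂, ⟨γ.continuous, Θ₁.continuous, fun t => (h₁ t).1⟩,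
    ⟨γ.continuous, Θ₂.continuous, fun t => (h₂ t).1⟩, by simp, fun t => (h₁ t).2,
    fun t => (h₂ t).2, by simp, by simp⟩

lemma eventually_cclConnected_of_path (hΩ : IsOpen Ω) {z₀ z₁ : ℂ} {J₀ J₁ J₂ : 𝕆}
    (γ : Path z₀ z₁) (Θ₁ : Path J₀ J₁) (Θ₂ : Path J₀ J₂)
    (h₁ : ∀ t, Θ₁ t ∈ sph ∧ tau (Θ₁ t) (γ t) ∈ Ω) (h₂ : ∀ t, Θ₂ t ∈ sph ∧ tau (Θ₂ t) (γ t) ∈ Ω) :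
    ∀ᶠ w in 𝓝 z₁, CCLConnected Ω (tau J₁ w) (tau J₂ w) := by
  have hU : IsOpen {u | tau J₁ u ∈ Ω ∧ tau J₂ u ∈ Ω} :=
    (hΩ.preimage (continuous_tau J₁)).inter (hΩ.preimage (continuous_tau J₂))
  obtain ⟨ε, hε, hball⟩ := Metric.isOpen_iff.1 hU z₁
    (by simpa using And.intro (h₁ 1).2 (h₂ 1).2)
  filter_upwards [Metric.ball_mem_nhds z₁ hε] with w hw
  obtain ⟨δ, hδ⟩ := ((convex_ball z₁ ε).isPathConnected ⟨z₁, Metric.mem_ball_self hε⟩).joinedIn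
    z₁ (Metric.mem_ball_self hε) w hw
  have hJ₁ : J₁ ∈ sph := by simpa using (h₁ 1).1
  have hJ₂ : J₂ ∈ sph := by simpa using (h₂ 1).1
  exact cclConnected_of_path (γ.trans δ) (Θ₁.trans (.refl J₁)) (Θ₂.trans (.refl J₂))
    (Path.forall_trans_apply (p := fun z J => J ∈ sph ∧ tau J z ∈ Ω) h₁
      fun t => ⟨hJ₁, (hball (hδ t)).1⟩)
    (Path.forall_trans_apply (p := fun z J => J ∈ sph ∧ tau J z ∈ Ω) h₂
      fun t => ⟨hJ₂, (hball (hδ t)).2⟩)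

lemma eventually_cclConnected_of_im_eq_zero (hΩ : IsOpen Ω) {z : ℂ} (hz : z.im = 0)
    {J J' : 𝕆} (hJ : J ∈ sph) (hJ' : J' ∈ sph) (hzΩ : tau J z ∈ Ω) :
    ∀ᶠ w in 𝓝 z, CCLConnected Ω (tau J w) (tau J' w) := by
  obtain ⟨Θ, hΘ⟩ := isPathConnected_sph.joinedIn J hJ J' hJ'
  exact eventually_cclConnected_of_path hΩ (.refl z) (.refl J) Θ (fun _ => ⟨hJ, hzΩ⟩)
    fun t => ⟨hΘ t, tau_of_im_eq_zero hz _ J ▸ hzΩ⟩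

/-- The coupled liftings end either over `z` itself or over `conj z`, where `τ_{-J} ∘ conj = τ_J`
lets us read the prolongation near `conj z` backwards. -/
lemma eventually_cclConnected_of_im_ne_zero (hΩ : IsOpen Ω) {z : ℂ} (hz : z.im ≠ 0)
    {J J' : 𝕆} (hJ : J ∈ sph) (hJ' : J' ∈ sph) (h : CCLConnected Ω (tau J z) (tau J' z)) :
    ∀ᶠ w in 𝓝 z, CCLConnected Ω (tau J w) (tau J' w) := by
  obtain ⟨γ, Θ₁, Θ₂, ⟨hγ, hΘ₁, hs₁⟩, ⟨-, hΘ₂, hs₂⟩, h0, hm₁, hm₂, he₁, he₂⟩ := h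
  have hlift : ∀ᶠ w in 𝓝 (γ 1), CCLConnected Ω (tau (Θ₁ 1) w) (tau (Θ₂ 1) w) :=
    eventually_cclConnected_of_path hΩ ⟨⟨γ, hγ⟩, rfl, rfl⟩ ⟨⟨Θ₁, hΘ₁⟩, rfl, rfl⟩
    ⟨⟨Θ₂, hΘ₂⟩, h0.symm, rfl⟩ (fun t => ⟨hs₁ t, hm₁ t⟩) (fun t => ⟨hs₂ t, hm₂ t⟩)
  rcases eq_or_eq_conj_of_tau_eq (hs₁ 1) hJ he₁ with hγ1 | hγ1
  · rw [hγ1] at he₁ he₂ hlift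
    rwa [sph_eq_of_tau_eq (hs₁ 1) hJ hz he₁, sph_eq_of_tau_eq (hs₂ 1) hJ' hz he₂] at hlift
  · have hz' : (starRingEnd ℂ z).im ≠ 0 := by simpa using hz
    rw [hγ1, ← tau_neg_conj J] at he₁
    rw [hγ1, ← tau_neg_conj J'] at he₂
    rw [hγ1, sph_eq_of_tau_eq (hs₁ 1) (neg_mem_sph hJ) hz' he₁,
      sph_eq_of_tau_eq (hs₂ 1) (neg_mem_sph hJ') hz' he₂] at hlift
    simpa only [tau_neg_conj] using (Complex.continuous_conj.tendsto z).eventually hlift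

lemma CCLConnected.re_onorm_im_eq {x y : 𝕆} (h : CCLConnected Ω x y) :
    (re x, onorm (im x)) = (re y, onorm (im y)) := by
  obtain ⟨γ, Θ₁, Θ₂, h₁, h₂, -, -, -, rfl, rfl⟩ := h
  simp only [re_tau (h₁.2.2 1), re_tau (h₂.2.2 1), onorm_im_tau (h₁.2.2 1),
    onorm_im_tau (h₂.2.2 1)]

lemma CCLEquiv.re_onorm_im_eq {x y : 𝕆} (h : CCLEquiv Ω x y) :
    (re x, onorm (im x)) = (re y, onorm (im y)) :=
  (Setoid.ker fun x => (re x, onorm (im x))).iseqv.eqvGen_iff.1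
    (Relation.EqvGen.mono (fun _ _ => CCLConnected.re_onorm_im_eq) _ _ h)

lemma exists_tau_eq_of_cclEquiv {z : ℂ} (hz : z.im ≠ 0) {J : 𝕆} (hJ : J ∈ sph) {y : 𝕆}
    (h : CCLEquiv Ω (tau J z) y) : ∃ K ∈ sph, tau K z = y := by
  obtain ⟨hre, him⟩ := Prod.ext_iff.1 h.re_onorm_im_eq
  exact exists_tau_eq hz (hre.symm.trans (re_tau hJ z)) (him.symm.trans (onorm_im_tau hJ z))

lemma eventually_cclEquiv_of_im_ne_zero (hΩ : IsOpen Ω) {z : ℂ} (hz : z.im ≠ 0) {x y : 𝕆}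
    (h : CCLEquiv Ω x y) {J J' : 𝕆} (hJ : J ∈ sph) (hJ' : J' ∈ sph) (hx : tau J z = x)
    (hy : tau J' z = y) : ∀ᶠ w in 𝓝 z, CCLEquiv Ω (tau J w) (tau J' w) := by
  induction h generalizing J J' with
  | rel x y h =>
    subst hx hy
    exact (eventually_cclConnected_of_im_ne_zero hΩ hz hJ hJ' h).mono fun _ => .rel _ _
  | refl x =>
    obtain rfl := sph_eq_of_tau_eq hJ hJ' hz (hx.trans hy.symm)
    exact .of_forall fun _ => .refl _
  | symm x y _ ih => exact (ih hJ' hJ hy hx).mono fun _ => .symm _ _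
  | trans x y u hxy _ ih₁ ih₂ =>
    subst hx
    obtain ⟨K, hK, rfl⟩ := exists_tau_eq_of_cclEquiv hz hJ hxy
    exact ((ih₁ hJ hK rfl rfl).and (ih₂ hK hJ' rfl hy)).mono fun _ h => .trans _ _ _ h.1 h.2

lemma eventually_cclEquiv (hΩ : IsOpen Ω) {z : ℂ} {J J' : 𝕆} (hJ : J ∈ sph) (hJ' : J' ∈ sph)
    (hzΩ : tau J z ∈ Ω) (h : CCLEquiv Ω (tau J z) (tau J' z)) :
    ∀ᶠ w in 𝓝 z, CCLEquiv Ω (tau J w) (tau J' w) := by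
  by_cases hz : z.im = 0
  · exact (eventually_cclConnected_of_im_eq_zero hΩ hz hJ hJ' hzΩ).mono fun _ => .rel _ _
  · exact eventually_cclEquiv_of_im_ne_zero hΩ hz h hJ hJ' rfl rfl

lemma isOpenMap_slice_val (hΩ : IsOpen Ω) (I : 𝕆) :
    IsOpenMap (Subtype.val : {z // tau I z ∈ Ω} → ℂ) :=
  (hΩ.preimage (continuous_tau I)).isOpenMap_subtype_val

lemma isOpenMap_mk_ohat (hΩ : IsOpen Ω) : IsOpenMap (Quotient.mk (ohatSetoid Ω)) := by
  intro V hV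
  rw [← isQuotientMap_quotient_mk'.isOpen_preimage, isOpen_sigma_iff]
  intro J
  rw [isOpen_iff_mem_nhds]
  rintro w ⟨⟨I, v⟩, hv, hvw⟩
  obtain ⟨hvw, hccl⟩ : v.1 = w.1 ∧ CCLEquiv Ω (tau I v) (tau J w) := Quotient.exact hvw
  have hVI := isOpenMap_slice_val hΩ I.1 _ (isOpen_sigma_iff.1 hV I)
  have hw : ∀ᶠ u in 𝓝 w.1, u ∈ Subtype.val '' ((Sigma.mk I : _ → OHat Ω) ⁻¹' V) ∧
      CCLEquiv Ω (tau I.1 u) (tau J.1 u) := by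
    rw [← hvw] at hccl ⊢
    exact Filter.Eventually.and (hVI.mem_nhds ⟨v, hv, rfl⟩)
      (eventually_cclEquiv hΩ I.2 J.2 v.2 hccl)
  filter_upwards [continuous_subtype_val.continuousAt.eventually hw] with u ⟨⟨u', hu', hu'u⟩, hu⟩
  exact ⟨⟨I, u'⟩, hu', Quotient.sound ⟨hu'u, hu'u ▸ hu⟩⟩

end Octonion

open Octonion in
theorem stmt18_general (Ω : Set 𝕆) (hΩo : IsOpen Ω) :
    ∃ P : DOmega Ω → ℂ,
      (∀ p : OHat Ω, P (Quotient.mk (ohatSetoid Ω) p) = p.2.1) ∧ IsLocalHomeomorph P := by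
  set q := Quotient.mk (ohatSetoid Ω)
  have hq : IsOpenQuotientMap q :=
    ⟨Quotient.mk_surjective, continuous_quot_mk, isOpenMap_mk_ohat hΩo⟩
  refine ⟨Quotient.lift (fun p => p.2.1) fun _ _ h => h.1, fun _ => rfl, ?_⟩
  refine .of_isLocallyInjective ?_ ?_ ?_
  · exact hq.continuous_comp_iff.1 (continuous_sigma fun I => continuous_subtype_val)
  · exact hq.isOpenMap_iff.2 (isOpenMap_sigma.2 fun I => isOpenMap_slice_val hΩo I.1)
  · intro x
    obtain ⟨⟨I, z⟩, rfl⟩ := hq.surjective x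
    refine ⟨q '' Set.range (Sigma.mk I), isOpenMap_mk_ohat hΩo _ isOpen_range_sigmaMk,
      ⟨_, ⟨z, rfl⟩, rfl⟩, ?_⟩
    rintro _ ⟨_, ⟨w, rfl⟩, rfl⟩ _ ⟨_, ⟨w', rfl⟩, rfl⟩ h
    obtain rfl : w = w' := Subtype.ext h
    rfl

open Octonion in
/-- the map `P : D_Ω → ℂ`, `[(z,I)] ↦ z`, is well defined and is a local
homeomorphism; that is, `(D_Ω, P)` is a Riemann domain over `ℂ`. -/
theorem stmt18 (Ω : Set 𝕆) (hΩo : IsOpen Ω) (hΩc : IsConnected Ω) :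
    ∃ P : DOmega Ω → ℂ,
      (∀ p : OHat Ω, P (Quotient.mk (ohatSetoid Ω) p) = p.2.1) ∧ IsLocalHomeomorph P :=
  stmt18_general Ω hΩo
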